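/- Let C be a symmetric convex body in an infinite-dimensional real Hilbert space H. For every complete orthonormal system 𝐞 = {e_γ}_{γ∈Γ} of H and every positive integer k, one has R^k(𝐞, C) = C, where R^k(𝐞, C) is the closed convex hull of C ∩ ⋃_{S ∈ [Γ]_k} F(Γ∖S). -/

import Mathlib

open Set

/-- `E ⊆ H` is a complete orthonormal system: its elements are pairwise orthogonal unit
vectors and its span is dense in `H`. -/
def IsCompleteONS {H : Type*} [NormedAddCommGroup H] [InnerProductSpace ℝ H]
    (E : Set H) : Prop :=
  Orthonormal ℝ ((↑) : E → H) ∧ (Submodule.span ℝ E).topologicalClosure = ⊤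

/-- `R^k(E, C)`: the closed convex hull of `C ∩ ⋃_{S ∈ [E]_k} F(E ∖ S)`. -/
noncomputable def kCoCrossH {H : Type*} [NormedAddCommGroup H] [InnerProductSpace ℝ H]
    (E : Set H) (k : ℕ) (C : Set H) : Set H :=
  closure (convexHull ℝ (C ∩ ⋃ S ∈ {S : Set H | S ⊆ E ∧ S.Finite ∧ S.ncard = k},
    ((Submodule.span ℝ (E \ S)).topologicalClosure : Set H)))

/-!
Since `H` is infinite-dimensional, `E` is infinite, so every finite combination of vectors
of `E` avoids some `k` of them: the span of `E`, hence the union of the `F(E ∖ S)`, is dense.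
A dense set meets the interior of the convex body `C` densely, and `C` lies in the closure of
its interior.
-/

theorem Set.Infinite.of_topologicalClosure_span_eq_top {𝕜 V : Type*} [NontriviallyNormedField 𝕜]
    [CompleteSpace 𝕜] [AddCommGroup V] [TopologicalSpace V] [IsTopologicalAddGroup V]
    [T2Space V] [Module 𝕜 V] [ContinuousSMul 𝕜 V] {E : Set V}
    (hE : (Submodule.span 𝕜 E).topologicalClosure = ⊤) (hV : ¬FiniteDimensional 𝕜 V) :
    E.Infinite := by
  intro hfin
  have := FiniteDimensional.span_of_finite 𝕜 hfin
  rw [(Submodule.closed_of_finiteDimensional _).submodule_topologicalClosure_eq] at hE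
  exact hV (Module.Finite.equiv (LinearEquiv.ofTop _ hE))

theorem Submodule.span_subset_biUnion_span_diff {R M : Type*} [Semiring R] [AddCommMonoid M]
    [Module R M] {E : Set M} (hE : E.Infinite) (k : ℕ) :
    (span R E : Set M) ⊆
      ⋃ S ∈ {S : Set M | S ⊆ E ∧ S.Finite ∧ S.ncard = k}, (span R (E \ S) : Set M) := by
  intro x hx
  obtain ⟨T, hTE, hxT⟩ := mem_span_finite_of_mem_span hx
  obtain ⟨S, hST, hSfin, hScard⟩ := (hE.sdiff T.finite_toSet).exists_subset_ncard_eq k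
  have hTS : (T : Set M) ⊆ E \ S := fun y hy => ⟨hTE hy, fun hyS => (hST hyS).2 hy⟩
  exact mem_biUnion ⟨hST.trans sdiff_subset, hSfin, hScard⟩ (span_mono hTS hxT)

theorem Convex.subset_closure_inter_of_dense {E : Type*} [AddCommGroup E] [Module ℝ E]
    [TopologicalSpace E] [IsTopologicalAddGroup E] [ContinuousSMul ℝ E] {C D : Set E}
    (hC : Convex ℝ C) (hC' : (interior C).Nonempty) (hD : Dense D) :
    C ⊆ closure (C ∩ D) :=
  calc C ⊆ closure (interior C) :=
        hC.closure_interior_eq_closure_of_nonempty_interior hC' ▸ subset_closure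
    _ ⊆ closure (interior C ∩ D) :=
        closure_minimal (hD.open_subset_closure_inter isOpen_interior) isClosed_closure
    _ ⊆ closure (C ∩ D) := closure_mono (inter_subset_inter_left _ interior_subset)

theorem stmt_14_general {H : Type*} [NormedAddCommGroup H] [InnerProductSpace ℝ H]
    (hinf : ¬ FiniteDimensional ℝ H)
    (C : Set H) (hCcl : IsClosed C) (hCconv : Convex ℝ C)
    (hCint : (interior C).Nonempty)
    (E : Set H) (hE : IsCompleteONS E) (k : ℕ) :
    kCoCrossH E k C = C := by
  refine subset_antisymm (closure_minimal (convexHull_min inter_subset_left hCconv) hCcl) ?_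
  have hdense : Dense (⋃ S ∈ {S : Set H | S ⊆ E ∧ S.Finite ∧ S.ncard = k},
      ((Submodule.span ℝ (E \ S)).topologicalClosure : Set H)) :=
    (Submodule.dense_iff_topologicalClosure_eq_top.2 hE.2).mono <|
      (Submodule.span_subset_biUnion_span_diff
        (Set.Infinite.of_topologicalClosure_span_eq_top hE.2 hinf) k).trans <|
      biUnion_mono subset_rfl fun S _ => Submodule.le_topologicalClosure _
  exact (hCconv.subset_closure_inter_of_dense hCint hdense).trans
    (closure_mono (subset_convexHull ℝ _))

/-- For a symmetric convex body `C` in an infinite-dimensional Hilbert space `H`, every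
complete orthonormal system `E` and every positive integer `k`, `R^k(E, C) = C`. -/
theorem stmt_14 {H : Type*} [NormedAddCommGroup H] [InnerProductSpace ℝ H] [CompleteSpace H]
    (hinf : ¬ FiniteDimensional ℝ H)
    (C : Set H) (hCcl : IsClosed C) (hCconv : Convex ℝ C)
    (hCbdd : Bornology.IsBounded C) (hCint : (interior C).Nonempty) (hCsym : C = -C)
    (E : Set H) (hE : IsCompleteONS E) (k : ℕ) (hk : 0 < k) :
    kCoCrossH E k C = C :=
  stmt_14_general hinf C hCcl hCconv hCint E hE k
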